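/- arXiv:2508.13959 — 6 statements merged into one kernel-verified Lean document; each statement's English description precedes it below -/
import Mathlib

section
/- Let d, ℓ ≥ 1, let {M_x}_{x∈𝒳} be a POVM on ℂ^d with finite outcome set 𝒳 and Tr[M_x] > 0 for every x ∈ 𝒳, let V_1, …, V_ℓ be Hermitian d×d complex matrices orthonormal for the trace inner product (Tr[V_i V_j] = 1 if i = j and 0 otherwise), let ε > 0, and for each sign vector z ∈ {−1,1}^ℓ let a_z ∈ [0,1] and σ_z = I/d + a_z·(ε/√(d·ℓ))·Σ_{i=1}^ℓ z_i V_i. Set T = Σ_{x∈𝒳} Tr[M_x²]/Tr[M_x]. Then the average over uniformly random z ∈ {−1,1}^ℓ of the total variation distance (1/2)·Σ_{x∈𝒳} |Tr[M_x σ_z] − Tr[M_x]/d| is at most ε·√(T/(2ℓ)). -/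
open Matrix
open scoped BigOperators ComplexOrder

/-!
The deviation of outcome `x` under `σ_z` is `a_z c ∑ᵢ zᵢ Tr[Mₓ Vᵢ]` with `c = ε/√(dℓ)`. Uniform
random signs are orthonormal, so by Cauchy–Schwarz its average absolute value is at most
`c ‖(Tr[Mₓ Vᵢ])ᵢ‖₂`, and Bessel's inequality for the orthonormal family `Vᵢ` bounds this by
`c √Tr[Mₓ²]`. Cauchy–Schwarz with the weights `Tr[Mₓ]`, which sum to `d`, then gives
`∑ₓ √Tr[Mₓ²] ≤ √(T d)`.
-/

lemma Real.sum_sqrt_le_sqrt_sum_div_mul_sqrt_sum {ι : Type*} (s : Finset ι) {p q : ι → ℝ}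
    (hp : ∀ i, 0 < p i) (hq : ∀ i, 0 ≤ q i) :
    ∑ i ∈ s, √(q i) ≤ √(∑ i ∈ s, q i / p i) * √(∑ i ∈ s, p i) := by
  calc ∑ i ∈ s, √(q i) = ∑ i ∈ s, √(q i / p i) * √(p i) := by
        refine Finset.sum_congr rfl fun i _ => ?_
        rw [← Real.sqrt_mul (div_nonneg (hq i) (hp i).le), div_mul_cancel₀ _ (hp i).ne']
    _ ≤ _ := Real.sum_sqrt_mul_sqrt_le s (fun i => div_nonneg (hq i) (hp i).le) fun i => (hp i).le

lemma div_sqrt_mul_div_two_mul_le (ε T : ℝ) (hε : 0 ≤ ε) (d ℓ : ℕ) :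
    ε / √(d * ℓ) / 2 * (√T * √d) ≤ ε * √(T / (2 * ℓ)) := by
  rcases Nat.eq_zero_or_pos d with rfl | hd
  · simp only [CharP.cast_eq_zero, Real.sqrt_zero, mul_zero]
    positivity
  rcases Nat.eq_zero_or_pos ℓ with rfl | hℓ
  · simp
  have hsqrt2 : √2 ≤ 2 := by
    rw [Real.sqrt_le_left zero_le_two]
    norm_num
  rw [Real.sqrt_mul (Nat.cast_nonneg d), Real.sqrt_div' _ (by positivity), Real.sqrt_mul zero_le_two]
  calc ε / (√d * √ℓ) / 2 * (√T * √d) = ε * (√T / (2 * √ℓ)) := by field_simp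
    _ ≤ ε * (√T / (√2 * √ℓ)) := by gcongr

def boolSign (b : Bool) : ℝ := if b then 1 else -1

@[simp] lemma boolSign_true : boolSign true = 1 := rfl

@[simp] lemma boolSign_false : boolSign false = -1 := rfl

lemma boolSign_not (b : Bool) : boolSign (!b) = -boolSign b := by cases b <;> simp

lemma boolSign_mul_self (b : Bool) : boolSign b * boolSign b = 1 := by cases b <;> simp

lemma Complex.ofReal_boolSign (b : Bool) : (boolSign b : ℂ) = if b then 1 else -1 := by
  cases b <;> simp

section RandomSigns

variable {ι : Type*} [Fintype ι] [DecidableEq ι]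

lemma sum_boolSign_mul_boolSign (i j : ι) :
    ∑ z : ι → Bool, boolSign (z i) * boolSign (z j) = if i = j then 2 ^ Fintype.card ι else 0 := by
  split_ifs with hij
  · subst hij
    simp [boolSign_mul_self]
  · -- flipping the `i`-th sign permutes `ι → Bool` and negates every summand
    have hflip : Function.Involutive fun z : ι → Bool => Function.update z i (!z i) := fun z => by
      ext k
      rcases eq_or_ne k i with rfl | hk <;> simp [*]
    have := hflip.bijective.sum_comp fun z => boolSign (z i) * boolSign (z j)
    simp only [Function.update_self, Function.update_of_ne (Ne.symm hij), boolSign_not, neg_mul,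
      Finset.sum_neg_distrib] at this
    linarith

lemma sum_sq_sum_boolSign_mul (t : ι → ℝ) :
    ∑ z : ι → Bool, (∑ i, boolSign (z i) * t i) ^ 2 = 2 ^ Fintype.card ι * ∑ i, t i ^ 2 := by
  calc ∑ z : ι → Bool, (∑ i, boolSign (z i) * t i) ^ 2
      = ∑ i, ∑ j, (∑ z : ι → Bool, boolSign (z i) * boolSign (z j)) * (t i * t j) := by
        simp_rw [sq, Finset.sum_mul_sum, Finset.sum_mul]
        rw [Finset.sum_comm]
        refine Finset.sum_congr rfl fun i _ => ?_
        rw [Finset.sum_comm]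
        exact Finset.sum_congr rfl fun j _ => Finset.sum_congr rfl fun z _ => by ring
    _ = 2 ^ Fintype.card ι * ∑ i, t i ^ 2 := by
        simp [sum_boolSign_mul_boolSign, Finset.mul_sum, sq]

lemma one_div_two_pow_mul_sum_abs_sum_boolSign_mul_le (t : ι → ℝ) :
    1 / 2 ^ Fintype.card ι * ∑ z : ι → Bool, |∑ i, boolSign (z i) * t i| ≤ √(∑ i, t i ^ 2) := by
  have hcs := sq_sum_le_card_mul_sum_sq (s := Finset.univ)
    (f := fun z : ι → Bool => |∑ i, boolSign (z i) * t i|)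
  simp only [sq_abs, sum_sq_sum_boolSign_mul, Finset.card_univ, Fintype.card_fun,
    Fintype.card_bool, Nat.cast_pow, Nat.cast_ofNat] at hcs
  rw [one_div_mul_eq_div, div_le_iff₀ (by positivity), mul_comm]
  refine abs_le_of_sq_le_sq' ?_ (by positivity) |>.2
  rw [mul_pow, Real.sq_sqrt (by positivity)]
  linarith

end RandomSigns

lemma re_trace_mul_self_nonneg {n : Type*} [Fintype n] {M : Matrix n n ℂ} (hM : M.IsHermitian) :
    0 ≤ (M * M).trace.re := by
  have := (posSemidef_self_mul_conjTranspose M).trace_nonneg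
  rw [hM.eq] at this
  exact (Complex.nonneg_iff.mp this).1

section TraceInequalities

variable {n : Type*} [Fintype n] [DecidableEq n]

/-- Bessel's inequality for the trace inner product `⟪A, B⟫ = Tr[B Aᴴ]`. -/
lemma sum_sq_re_trace_mul_le {𝕜 ι : Type*} [RCLike 𝕜] [Fintype ι] [DecidableEq ι]
    (N : Matrix n n 𝕜) (hN : N.IsHermitian) (V : ι → Matrix n n 𝕜)
    (hV : ∀ i, (V i).IsHermitian)
    (hVortho : ∀ i j, (V i * V j).trace = if i = j then 1 else 0) :
    ∑ i, RCLike.re (N * V i).trace ^ 2 ≤ RCLike.re (N * N).trace := by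
  let := (1 : Matrix n n 𝕜).toMatrixSeminormedAddCommGroup PosSemidef.one
  let := (1 : Matrix n n 𝕜).toMatrixInnerProductSpace PosSemidef.one
  have hinner (A B : Matrix n n 𝕜) : inner 𝕜 A B = (B * Aᴴ).trace := by
    show (B * 1 * Aᴴ).trace = _
    rw [Matrix.mul_one]
  have hortho : Orthonormal 𝕜 V := by
    rw [orthonormal_iff_ite]
    intro i j
    rw [hinner, (hV i).eq, hVortho]
    simp only [eq_comm]
  calc ∑ i, RCLike.re (N * V i).trace ^ 2 ≤ ∑ i, ‖inner 𝕜 (V i) N‖ ^ 2 := by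
        refine Finset.sum_le_sum fun i _ => ?_
        rw [hinner, (hV i).eq, ← sq_abs]
        exact pow_le_pow_left₀ (abs_nonneg _) (RCLike.abs_re_le_norm _) 2
    _ ≤ ‖N‖ ^ 2 := hortho.sum_inner_products_le N
    _ = RCLike.re (N * N).trace := by
        rw [@norm_sq_eq_re_inner 𝕜, hinner, hN.eq]

lemma sum_re_trace_eq_card {𝒳 : Type*} [Fintype 𝒳] (M : 𝒳 → Matrix n n ℂ)
    (hM : ∑ x, M x = 1) :
    ∑ x, (M x).trace.re = Fintype.card n := by
  rw [← Complex.re_sum, ← trace_sum, hM, trace_one, Complex.natCast_re]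

lemma re_trace_mul_perturbation {ι : Type*} [Fintype ι] (M : Matrix n n ℂ) (r c : ℝ)
    (s : ι → ℝ) (V : ι → Matrix n n ℂ) :
    (M * ((r : ℂ)⁻¹ • 1 + (c : ℂ) • ∑ i, (s i : ℂ) • V i)).trace.re - M.trace.re / r
      = c * ∑ i, s i * (M * V i).trace.re := by
  simp only [Matrix.mul_add, Matrix.mul_smul, Matrix.mul_one, Matrix.mul_sum, trace_add, trace_smul,
    trace_sum, smul_eq_mul, Complex.add_re, Complex.re_sum, ← Complex.ofReal_inv,
    Complex.re_ofReal_mul]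
  ring

end TraceInequalities

theorem averaged_tv_le_sqrt_info_channel_general
    {d ℓ : ℕ}
    {𝒳 : Type*} [Fintype 𝒳]
    (M : 𝒳 → Matrix (Fin d) (Fin d) ℂ)
    (hMpsd : ∀ x, (M x).PosSemidef)
    (hMsum : ∑ x, M x = 1)
    (hMtr : ∀ x, 0 < (M x).trace.re)
    (V : Fin ℓ → Matrix (Fin d) (Fin d) ℂ)
    (hVherm : ∀ i, (V i).IsHermitian)
    (hVortho : ∀ i j, ((V i) * (V j)).trace = if i = j then 1 else 0)
    (ε : ℝ) (hε : 0 < ε)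
    (a : (Fin ℓ → Bool) → ℝ) (ha : ∀ z, a z ∈ Set.Icc (0 : ℝ) 1)
    (σ : (Fin ℓ → Bool) → Matrix (Fin d) (Fin d) ℂ)
    (hσ : ∀ z, σ z = ((d : ℂ))⁻¹ • (1 : Matrix (Fin d) (Fin d) ℂ)
      + ((a z * (ε / Real.sqrt (d * ℓ)) : ℝ) : ℂ) •
          ∑ i, (if z i then (1 : ℂ) else -1) • V i)
    (T : ℝ) (hT : T = ∑ x, ((M x * M x).trace.re) / (M x).trace.re) :
    ((1 : ℝ) / 2 ^ ℓ) * ∑ z : Fin ℓ → Bool,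
        (1 / 2) * ∑ x, |((M x) * (σ z)).trace.re - (M x).trace.re / d|
      ≤ ε * Real.sqrt (T / (2 * ℓ)) := by
  set c := ε / √(d * ℓ)
  have hc : 0 ≤ c := by positivity
  set t : 𝒳 → Fin ℓ → ℝ := fun x i => (M x * V i).trace.re
  have hdev (z x) : |(M x * σ z).trace.re - (M x).trace.re / d|
      ≤ c * |∑ i, boolSign (z i) * t x i| := by
    have hσz : σ z = ((d : ℝ) : ℂ)⁻¹ • 1 + ((a z * c : ℝ) : ℂ) • ∑ i, (boolSign (z i) : ℂ) • V i := by
      simp only [hσ z, Complex.ofReal_natCast, Complex.ofReal_boolSign]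
    rw [hσz, re_trace_mul_perturbation, abs_mul, abs_of_nonneg (mul_nonneg (ha z).1 hc)]
    exact mul_le_mul_of_nonneg_right (mul_le_of_le_one_left hc (ha z).2) (abs_nonneg _)
  have hbessel (x) : √(∑ i, t x i ^ 2) ≤ √((M x * M x).trace.re) :=
    Real.sqrt_le_sqrt (sum_sq_re_trace_mul_le _ (hMpsd x).isHermitian V hVherm hVortho)
  have hweighted : ∑ x, √((M x * M x).trace.re) ≤ √T * √d := by
    have := Real.sum_sqrt_le_sqrt_sum_div_mul_sqrt_sum Finset.univ hMtr
      fun x => re_trace_mul_self_nonneg (hMpsd x).isHermitian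
    rwa [← hT, sum_re_trace_eq_card M hMsum, Fintype.card_fin] at this
  calc ((1 : ℝ) / 2 ^ ℓ) * ∑ z : Fin ℓ → Bool,
        (1 / 2) * ∑ x, |((M x) * (σ z)).trace.re - (M x).trace.re / d|
      ≤ ((1 : ℝ) / 2 ^ ℓ) * ∑ z : Fin ℓ → Bool,
        (1 / 2) * ∑ x, c * |∑ i, boolSign (z i) * t x i| := by
        gcongr with z _ x _
        exact hdev z x
    _ = c / 2 * ∑ x, 1 / 2 ^ ℓ * ∑ z : Fin ℓ → Bool, |∑ i, boolSign (z i) * t x i| := by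
        simp_rw [Finset.mul_sum]
        rw [Finset.sum_comm]
        exact Finset.sum_congr rfl fun x _ => Finset.sum_congr rfl fun z _ => by ring
    _ ≤ c / 2 * ∑ x, √(∑ i, t x i ^ 2) := by
        gcongr with x _
        simpa using one_div_two_pow_mul_sum_abs_sum_boolSign_mul_le (t x)
    _ ≤ c / 2 * (√T * √d) := by
        gcongr
        exact (Finset.sum_le_sum fun x _ => hbessel x).trans hweighted
    _ ≤ ε * √(T / (2 * ℓ)) := div_sqrt_mul_div_two_mul_le ε T hε.le d ℓ

/-- averaged total variation distance bound for a POVM measuring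
the perturbed states σ_z versus the maximally mixed state, in terms of the trace
norm `T` of the measurement information channel. -/
theorem averaged_tv_le_sqrt_info_channel
    {d ℓ : ℕ} (hd : 1 ≤ d) (hℓ : 1 ≤ ℓ)
    {𝒳 : Type*} [Fintype 𝒳]
    (M : 𝒳 → Matrix (Fin d) (Fin d) ℂ)
    (hMpsd : ∀ x, (M x).PosSemidef)
    (hMsum : ∑ x, M x = 1)
    (hMtr : ∀ x, 0 < (M x).trace.re)
    (V : Fin ℓ → Matrix (Fin d) (Fin d) ℂ)
    (hVherm : ∀ i, (V i).IsHermitian)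
    (hVortho : ∀ i j, ((V i) * (V j)).trace = if i = j then 1 else 0)
    (ε : ℝ) (hε : 0 < ε)
    (a : (Fin ℓ → Bool) → ℝ) (ha : ∀ z, a z ∈ Set.Icc (0 : ℝ) 1)
    (σ : (Fin ℓ → Bool) → Matrix (Fin d) (Fin d) ℂ)
    (hσ : ∀ z, σ z = ((d : ℂ))⁻¹ • (1 : Matrix (Fin d) (Fin d) ℂ)
      + ((a z * (ε / Real.sqrt (d * ℓ)) : ℝ) : ℂ) •
          ∑ i, (if z i then (1 : ℂ) else -1) • V i)
    (T : ℝ) (hT : T = ∑ x, ((M x * M x).trace.re) / (M x).trace.re) :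
    ((1 : ℝ) / 2 ^ ℓ) * ∑ z : Fin ℓ → Bool,
        (1 / 2) * ∑ x, |((M x) * (σ z)).trace.re - (M x).trace.re / d|
      ≤ ε * Real.sqrt (T / (2 * ℓ)) :=
  averaged_tv_le_sqrt_info_channel_general M hMpsd hMsum hMtr V hVherm hVortho ε hε a ha σ hσ T hT
end

section
/- Let ρ, ρ̂, ρ̃ be Hermitian d×d complex matrices such that ρ has rank at most r, ρ̃ has rank at most r, and ‖ρ̃ − ρ̂‖_F ≤ ‖ρ − ρ̂‖_F (ρ̃ is at least as close to ρ̂ in Frobenius norm as ρ is). Then the trace norm satisfies ‖ρ̃ − ρ‖₁ ≤ 2·√(2r)·‖ρ̂ − ρ‖_F. -/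
/-! The difference `ρ̃ - ρ` has rank at most `2r`, and by the triangle inequality through `ρ̂`
its Frobenius norm is at most `2‖ρ̂ - ρ‖_F`. For a Hermitian matrix of rank `k`,
Cauchy–Schwarz over its `k` nonzero eigenvalues gives `‖A‖₁ ≤ √k ‖A‖_F`. -/

open Matrix
open scoped Matrix.Norms.Frobenius

theorem Real.sum_abs_le_sqrt_card_ne_zero_mul_sqrt_sum_sq {ι : Type*} [Fintype ι] (f : ι → ℝ) :
    ∑ i, |f i| ≤ √(Fintype.card {i // f i ≠ 0}) * √(∑ i, f i ^ 2) := by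
  classical
  set s := Finset.univ.filter (f · ≠ 0)
  have hsupport : ∀ g : ℝ → ℝ, g 0 = 0 → ∑ i ∈ s, g (f i) = ∑ i, g (f i) := fun g hg =>
    Finset.sum_filter_of_ne fun i _ hi => by contrapose! hi; simp [hi, hg]
  calc ∑ i, |f i| = ∑ i ∈ s, 1 * |f i| := by simpa using (hsupport (|·|) abs_zero).symm
    _ ≤ √(∑ i ∈ s, 1 ^ 2) * √(∑ i ∈ s, |f i| ^ 2) := Real.sum_mul_le_sqrt_mul_sqrt _ _ _
    _ = √(Fintype.card {i // f i ≠ 0}) * √(∑ i, f i ^ 2) := by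
      simp_rw [sq_abs, hsupport (· ^ 2) (zero_pow two_ne_zero), Fintype.card_subtype]
      simp [s]

namespace Matrix

variable {m n : Type*} [Fintype n]

theorem rank_add_le {K : Type*} [Field K] (A B : Matrix m n K) :
    (A + B).rank ≤ A.rank + B.rank := by
  unfold rank
  rw [mulVecLin_add]
  exact (Submodule.finrank_mono (LinearMap.range_add_le _ _)).trans
    (Submodule.finrank_add_le_finrank_add_finrank _ _)

theorem rank_neg {K : Type*} [Field K] (A : Matrix m n K) : (-A).rank = A.rank := by
  have : (-A).mulVecLin = -A.mulVecLin := LinearMap.ext fun x => neg_mulVec x A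
  rw [rank, rank, this, LinearMap.range_neg]

theorem rank_sub_le {K : Type*} [Field K] (A B : Matrix m n K) :
    (A - B).rank ≤ A.rank + B.rank := by
  simpa [sub_eq_add_neg, rank_neg] using rank_add_le A (-B)

variable {𝕜 : Type*} [RCLike 𝕜]

theorem frobenius_norm_sq_eq_re_trace_conjTranspose_mul_self [Fintype m] (A : Matrix m n 𝕜) :
    ‖A‖ ^ 2 = RCLike.re (Aᴴ * A).trace := by
  rw [frobenius_norm_def, ← Real.rpow_natCast, ← Real.rpow_mul (by positivity)]
  norm_num [trace, mul_apply, Finset.sum_comm (γ := m), RCLike.conj_mul]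

namespace IsHermitian

variable [DecidableEq n] {A : Matrix n n 𝕜}

theorem re_trace_mul_self (hA : A.IsHermitian) :
    RCLike.re (A * A).trace = ∑ i, hA.eigenvalues i ^ 2 := by
  conv_lhs => rw [hA.spectral_theorem, ← map_mul, Unitary.conjStarAlgAut_apply, trace_mul_cycle,
    Unitary.coe_star_mul_self, one_mul, diagonal_mul_diagonal, trace_diagonal]
  simp [sq]

theorem frobenius_norm_sq (hA : A.IsHermitian) : ‖A‖ ^ 2 = ∑ i, hA.eigenvalues i ^ 2 := by
  rw [frobenius_norm_sq_eq_re_trace_conjTranspose_mul_self, hA.eq, hA.re_trace_mul_self]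

theorem sqrt_re_trace_mul_self (hA : A.IsHermitian) : √(RCLike.re (A * A).trace) = ‖A‖ := by
  rw [hA.re_trace_mul_self, ← hA.frobenius_norm_sq, Real.sqrt_sq (norm_nonneg A)]

theorem sum_abs_eigenvalues_le_sqrt_rank_mul_frobenius_norm (hA : A.IsHermitian) :
    ∑ i, |hA.eigenvalues i| ≤ √A.rank * ‖A‖ := by
  rw [hA.rank_eq_card_non_zero_eigs, ← Real.sqrt_sq (norm_nonneg A), hA.frobenius_norm_sq]
  exact Real.sum_abs_le_sqrt_card_ne_zero_mul_sqrt_sum_sq _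

end IsHermitian

end Matrix

/-- if `ρ̃` is a rank-`r` matrix at least as close to the estimate `ρ̂`
in Frobenius norm as the rank-`r` matrix `ρ` is, then the trace distance between
`ρ̃` and `ρ` is at most `2·√(2r)` times the Frobenius distance `‖ρ̂ − ρ‖_F`. -/
theorem rank_r_projection_trace_norm_bound
    {d r : ℕ} (ρ ρhat ρtil : Matrix (Fin d) (Fin d) ℂ)
    (hρ : ρ.IsHermitian) (hρhat : ρhat.IsHermitian) (hρtil : ρtil.IsHermitian)
    (hrρ : ρ.rank ≤ r) (hrρtil : ρtil.rank ≤ r)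
    (hclose : Real.sqrt (((ρtil - ρhat) * (ρtil - ρhat)).trace.re)
      ≤ Real.sqrt (((ρ - ρhat) * (ρ - ρhat)).trace.re)) :
    ∑ i, |(hρtil.sub hρ).eigenvalues i|
      ≤ 2 * Real.sqrt (2 * r) * Real.sqrt (((ρhat - ρ) * (ρhat - ρ)).trace.re) := by
  have hfrob {X : Matrix (Fin d) (Fin d) ℂ} (hX : X.IsHermitian) : √((X * X).trace.re) = ‖X‖ :=
    hX.sqrt_re_trace_mul_self
  rw [hfrob (hρtil.sub hρhat), hfrob (hρ.sub hρhat)] at hclose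
  rw [hfrob (hρhat.sub hρ)]
  have hrank : ((ρtil - ρ).rank : ℝ) ≤ 2 * r := by
    exact_mod_cast (rank_sub_le ρtil ρ).trans (by omega)
  have hdist : ‖ρtil - ρ‖ ≤ 2 * ‖ρhat - ρ‖ := by
    calc ‖ρtil - ρ‖ ≤ ‖ρtil - ρhat‖ + ‖ρhat - ρ‖ := norm_sub_le_norm_sub_add_norm_sub _ _ _
      _ ≤ ‖ρ - ρhat‖ + ‖ρhat - ρ‖ := by gcongr
      _ = 2 * ‖ρhat - ρ‖ := by rw [norm_sub_rev]; ring
  calc ∑ i, |(hρtil.sub hρ).eigenvalues i| ≤ √(ρtil - ρ).rank * ‖ρtil - ρ‖ :=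
        (hρtil.sub hρ).sum_abs_eigenvalues_le_sqrt_rank_mul_frobenius_norm
    _ ≤ √(2 * r) * (2 * ‖ρhat - ρ‖) := by gcongr
    _ = 2 * √(2 * r) * ‖ρhat - ρ‖ := by ring
end

section
/- For every Hermitian d×d complex matrix M, the matrix (3·(Tr M)² + 3·Tr(M²))·I − 2·(Tr M)·M − 2·M² is positive semidefinite. -/
/-!
With `s = Tr M` (a real number, as `M` is Hermitian),
`(3s² + 3 Tr(M²))·I − 2sM − 2M² = (sI − M)² + 2s²·I + 3(Tr(M²)·I − M²)`.
The last term is positive semidefinite because `M² = MᴴM` is, and a positive semidefinite matrix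
lies below its trace times the identity: each of its eigenvalues is bounded by their sum.
-/

open Matrix
open scoped ComplexOrder

namespace Matrix

variable {n 𝕜 : Type*} [Fintype n] [DecidableEq n] [RCLike 𝕜]

open scoped MatrixOrder in
theorem PosSemidef.trace_smul_one_sub_self {P : Matrix n n 𝕜} (hP : P.PosSemidef) :
    (P.trace • 1 - P).PosSemidef := by
  have hle : P ≤ algebraMap ℝ _ (∑ i, hP.1.eigenvalues i) := by
    refine le_algebraMap_of_spectrum_le fun x hx => ?_
    obtain ⟨i, rfl⟩ := hP.1.spectrum_real_eq_range_eigenvalues ▸ hx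
    exact Finset.single_le_sum (fun j _ => hP.eigenvalues_nonneg j) (Finset.mem_univ i)
  rwa [hP.1.trace_eq_sum_eigenvalues, ← RCLike.ofReal_sum, ← RCLike.real_smul_eq_coe_smul,
    ← Algebra.algebraMap_eq_smul_one]

theorem IsHermitian.exists_trace_eq_ofReal {M : Matrix n n 𝕜} (hM : M.IsHermitian) :
    ∃ s : ℝ, M.trace = s :=
  ⟨_, hM.trace_eq_sum_eigenvalues.trans (RCLike.ofReal_sum _ _).symm⟩

end Matrix

/-- for every Hermitian `M`, the matrix
`(3(Tr M)² + 3 Tr(M²))·I − 2(Tr M)·M − 2M²` is positive semidefinite. -/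
theorem sos_second_moment_matrix_posSemidef
    {d : ℕ} (M : Matrix (Fin d) (Fin d) ℂ) (hM : M.IsHermitian) :
    ((3 * M.trace ^ 2 + 3 * (M * M).trace) • (1 : Matrix (Fin d) (Fin d) ℂ)
      - (2 * M.trace) • M - (2 : ℂ) • (M * M)).PosSemidef := by
  obtain ⟨s, hs⟩ := hM.exists_trace_eq_ofReal
  set N := (s : ℂ) • 1 - M
  have hN : N.IsHermitian := (isHermitian_one.smul (Complex.conj_ofReal s)).sub hM
  have hMM : (M * M).PosSemidef := by
    simpa only [hM.eq] using posSemidef_conjTranspose_mul_self M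
  have key : (3 * M.trace ^ 2 + 3 * (M * M).trace) • (1 : Matrix (Fin d) (Fin d) ℂ)
      - (2 * M.trace) • M - (2 : ℂ) • (M * M)
      = Nᴴ * N + ((2 * s ^ 2 : ℝ) : ℂ) • 1 + (3 : ℂ) • ((M * M).trace • 1 - M * M) := by
    rw [hN.eq, hs]
    simp only [N, sub_mul, mul_sub, one_mul, mul_one, smul_mul_assoc, mul_smul_comm]
    push_cast
    module
  rw [key]
  refine ((posSemidef_conjTranspose_mul_self N).add (PosSemidef.one.smul ?_)).add
    (hMM.trace_smul_one_sub_self.smul (by norm_num))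
  exact Complex.zero_le_real.mpr (by positivity)
end

section
/- Let M be a Hermitian d×d complex matrix, let ρ be a positive semidefinite Hermitian d×d complex matrix with Tr(ρ²) ≤ 1, and let k ≥ 1 be an integer. Then (Tr(M^k ρ))² ≤ (Tr(M²))^k. -/
/-!
Work with the Frobenius norm, for which `‖A‖² = Re Tr(A Aᴴ)`. Cauchy–Schwarz for the Frobenius
inner product gives `|Tr(M^k ρ)| ≤ ‖M^k‖ ‖ρ‖`; here `‖ρ‖² = Tr(ρ²) ≤ 1` and, by
submultiplicativity, `‖M^k‖² ≤ (‖M‖²)^k = Tr(M²)^k`.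
-/

open Matrix
open scoped ComplexOrder Matrix.Norms.Frobenius

namespace Matrix

variable {m n 𝕜 : Type*} [Fintype m] [Fintype n] [RCLike 𝕜]

theorem frobenius_norm_sq_eq_re_trace_mul_conjTranspose (A : Matrix m n 𝕜) :
    ‖A‖ ^ 2 = RCLike.re (A * Aᴴ).trace := by
  change ‖WithLp.toLp 2 fun i => WithLp.toLp 2 fun j => A i j‖ ^ 2 = _
  simp [PiLp.norm_sq_eq_of_L2, trace, mul_apply, RCLike.mul_conj]

theorem norm_trace_mul_le (A : Matrix m n 𝕜) (B : Matrix n m 𝕜) :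
    ‖(A * B).trace‖ ≤ ‖A‖ * ‖B‖ := by
  have h : (A * B).trace = inner 𝕜 (WithLp.toLp 2 fun i => WithLp.toLp 2 fun j => star (A i j))
      (WithLp.toLp 2 fun i => WithLp.toLp 2 fun j => B j i) := by
    simp [trace, mul_apply, PiLp.inner_apply, mul_comm]
  calc ‖(A * B).trace‖ ≤ ‖A.map star‖ * ‖Bᵀ‖ := h ▸ norm_inner_le_norm _ _
    _ = ‖A‖ * ‖B‖ := by rw [frobenius_norm_map_eq _ _ norm_star, frobenius_norm_transpose]

end Matrix

/-- for Hermitian `M`, p.s.d. `ρ` with `Tr(ρ²) ≤ 1` and `k ≥ 1`,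
`(Tr(M^k ρ))² ≤ (Tr(M²))^k`. -/
theorem trace_pow_state_sq_le
    {d : ℕ} (M ρ : Matrix (Fin d) (Fin d) ℂ)
    (hM : M.IsHermitian) (hρ : ρ.PosSemidef) (hρ2 : ((ρ * ρ).trace).re ≤ 1)
    (k : ℕ) (hk : 1 ≤ k) :
    (((M ^ k * ρ).trace).re) ^ 2 ≤ (((M * M).trace).re) ^ k := by
  have hρ_norm : ‖ρ‖ ≤ 1 := by
    refine (pow_le_one_iff_of_nonneg (norm_nonneg ρ) two_ne_zero).mp ?_
    rwa [frobenius_norm_sq_eq_re_trace_mul_conjTranspose, hρ.isHermitian.eq]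
  calc ((M ^ k * ρ).trace.re) ^ 2 ≤ ‖(M ^ k * ρ).trace‖ ^ 2 := by
        rw [← sq_abs]; gcongr; exact Complex.abs_re_le_norm _
    _ ≤ (‖M ^ k‖ * ‖ρ‖) ^ 2 := by gcongr; exact norm_trace_mul_le _ _
    _ ≤ (‖M‖ ^ k * 1) ^ 2 := by gcongr; exact norm_pow_le' M hk
    _ = ((M * M).trace.re) ^ k := by
        rw [mul_one, ← pow_mul, mul_comm, pow_mul, frobenius_norm_sq_eq_re_trace_mul_conjTranspose,
          hM.eq]
        rfl
end

section
/- Let ρ be a density matrix on ℂ^d and e₀ a fixed unit vector in ℂ^d. Then d · ∫_{U(d)} (U e₀)(U e₀)^† · ⟨U e₀, ρ (U e₀)⟩ dμ(U) = (I + ρ)/(d + 1), where μ is Haar measure on the unitary group U(d). In particular, the mean of the rank-one outcome of the uniform POVM applied to ρ equals (I + ρ)/(d + 1). -/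
/-!
Write `v = U *ᵥ e₀` and `T j l k m = E[v j * v l * conj (v k) * conj (v m)]`. Expanding the
quadratic form, the integral is `∑ m, ∑ l, ρ m l * T j l k m`, so everything reduces to the fourth
moments of `v`. Left invariance of `μ` turns `T` into a tensor invariant under every unitary `V`.
Diagonal phases kill `T j l k m` unless `{j, l} = {k, m}`, permutation matrices make `T p p p p`
independent of `p`, and the unitary `((1 + i)/2) • (1 - i • S)`, with `S` the transposition of
two coordinates `x ≠ y`, mixes `v x` with `v y` and gives `T x x x x = 2 * T x y x y`. Hence
`T p q p q = γ * (1 + δ p q)`, and `∑ p, ∑ q, T p q p q = E[‖v‖⁴] = 1` forces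
`γ = 1 / (d * (d + 1))`.
-/

open Matrix MeasureTheory Complex
open scoped ComplexOrder ComplexConjugate

section UnitaryGroup

variable {n : Type*} [Fintype n] [DecidableEq n]

theorem isCompact_unitaryGroup {𝕜 : Type*} [RCLike 𝕜] :
    IsCompact (unitaryGroup n 𝕜 : Set (Matrix n n 𝕜)) := by
  refine (isCompact_univ_pi fun i => isCompact_univ_pi fun j =>
    isCompact_closedBall (0 : 𝕜) 1).of_isClosed_subset ?_
    fun U hU i _ j _ => by simpa using entry_norm_bound_of_unitary hU i j
  rw [show (unitaryGroup n 𝕜 : Set (Matrix n n 𝕜)) = {U | U * star U = 1} from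
    Set.ext fun _ => mem_unitaryGroup_iff]
  exact isClosed_eq (by fun_prop) continuous_const

instance {𝕜 : Type*} [RCLike 𝕜] : CompactSpace (unitaryGroup n 𝕜) :=
  isCompact_iff_compactSpace.mp isCompact_unitaryGroup

theorem diagonal_mem_unitaryGroup {α : Type*} [CommRing α] [StarRing α] {t : n → α}
    (ht : ∀ i, star (t i) * t i = 1) : diagonal t ∈ unitaryGroup n α := by
  rw [mem_unitaryGroup_iff', star_eq_conjTranspose, diagonal_conjTranspose, diagonal_mul_diagonal]
  simp [ht]

theorem permMatrix_mem_unitaryGroup {α : Type*} [CommRing α] [StarRing α] (σ : Equiv.Perm n) :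
    σ.permMatrix α ∈ unitaryGroup n α := by
  rw [mem_unitaryGroup_iff', star_eq_conjTranspose, conjTranspose_permMatrix, ← permMatrix_mul,
    mul_inv_cancel, permMatrix_one]

end UnitaryGroup

theorem smul_one_sub_I_smul_mem_unitary {A : Type*} [Ring A] [StarRing A] [Algebra ℂ A]
    [StarModule ℂ A] {S : A} (hS : IsSelfAdjoint S) (hS2 : S * S = 1) :
    ((1 + I) / 2 : ℂ) • (1 - I • S) ∈ unitary A := by
  have hc : conj ((1 + I) / 2 : ℂ) * ((1 + I) / 2) = 2⁻¹ := by
    rw [map_div₀, map_add, map_one, conj_I, map_ofNat]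
    ring_nf
    rw [I_sq]
    ring
  have hstar : star (1 - I • S) = 1 + I • S := by
    rw [star_sub, star_one, star_smul, hS.star_eq, RCLike.star_def, conj_I, neg_smul,
      sub_neg_eq_add]
  have h1 : (1 + I • S) * (1 - I • S) = (2 : ℂ) • (1 : A) := by
    simp only [mul_sub, add_mul, one_mul, mul_one, smul_mul_smul_comm, hS2, I_mul_I]
    module
  have h2 : (1 - I • S) * (1 + I • S) = (2 : ℂ) • (1 : A) := by
    simp only [mul_add, sub_mul, one_mul, mul_one, smul_mul_smul_comm, hS2, I_mul_I]
    module
  rw [Unitary.mem_iff, star_smul, hstar, smul_mul_smul_comm, smul_mul_smul_comm, h1, h2,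
    RCLike.star_def, mul_comm ((1 + I) / 2), hc, smul_smul]
  norm_num

theorem Continuous.integrable_of_compactSpace {X E : Type*} [TopologicalSpace X] [CompactSpace X]
    [MeasurableSpace X] [OpensMeasurableSpace X] [NormedAddCommGroup E] {μ : Measure X}
    [IsFiniteMeasure μ] {f : X → E} (hf : Continuous f) : Integrable f μ :=
  hf.integrable_of_hasCompactSupport (HasCompactSupport.of_compactSpace _)

section Quartic

variable {n : Type*}

def quartic (j l k m : n) (w : n → ℂ) : ℂ := w j * w l * conj (w k) * conj (w m)

@[fun_prop]
theorem continuous_quartic (j l k m : n) : Continuous (quartic j l k m) := by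
  unfold quartic
  fun_prop

variable [Fintype n]

theorem quartic_mulVec (V : Matrix n n ℂ) (w : n → ℂ) (j l k m : n) :
    quartic j l k m (V *ᵥ w) = ∑ p, ∑ q, ∑ r, ∑ s,
      V j p * V l q * conj (V k r) * conj (V m s) * quartic p q r s w := by
  have hterm : ∀ p q r s, V j p * V l q * conj (V k r) * conj (V m s) * quartic p q r s w
      = V j p * w p * (V l q * w q * (conj (V k r * w r) * conj (V m s * w s))) := by
    intro p q r s
    simp only [quartic, map_mul]
    ring
  simp only [hterm, ← Finset.mul_sum, ← Finset.sum_mul, ← map_sum]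
  simp only [quartic, mulVec, dotProduct, mul_assoc]

theorem sum_quartic_self (w : n → ℂ) : ∑ p, ∑ q, quartic p q p q w = (star w ⬝ᵥ w) ^ 2 := by
  simp only [sq, dotProduct, Finset.sum_mul_sum, Pi.star_apply, RCLike.star_def]
  exact Finset.sum_congr rfl fun p _ => Finset.sum_congr rfl fun q _ => by unfold quartic; ring

theorem mul_star_dotProduct_mulVec_eq_sum (ρ : Matrix n n ℂ) (w : n → ℂ) (j k : n) :
    w j * conj (w k) * (star w ⬝ᵥ ρ *ᵥ w) = ∑ m, ∑ l, ρ m l * quartic j l k m w := by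
  simp only [dotProduct, mulVec, Finset.mul_sum, Pi.star_apply, RCLike.star_def]
  exact Finset.sum_congr rfl fun m _ => Finset.sum_congr rfl fun l _ => by unfold quartic; ring

end Quartic

section FourthMoment

variable {n : Type*} [Fintype n] [DecidableEq n] [MeasurableSpace (unitaryGroup n ℂ)]
  (μ : Measure (unitaryGroup n ℂ)) (e : n → ℂ)

noncomputable def fourthMoment (j l k m : n) : ℂ :=
  ∫ U : unitaryGroup n ℂ, quartic j l k m ((U : Matrix n n ℂ) *ᵥ e) ∂μ

theorem fourthMoment_comm_left (j l k m : n) :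
    fourthMoment μ e j l k m = fourthMoment μ e l j k m := by
  simp only [fourthMoment, quartic, mul_comm (((_ : Matrix n n ℂ) *ᵥ e) j)]

theorem fourthMoment_comm_right (j l k m : n) :
    fourthMoment μ e j l k m = fourthMoment μ e j l m k := by
  simp only [fourthMoment, quartic, mul_right_comm _ (conj (((_ : Matrix n n ℂ) *ᵥ e) k))]

variable [BorelSpace (unitaryGroup n ℂ)]

section

variable [IsFiniteMeasure μ] [μ.IsMulLeftInvariant]

theorem fourthMoment_eq_sum (V : unitaryGroup n ℂ) (j l k m : n) :
    fourthMoment μ e j l k m = ∑ p, ∑ q, ∑ r, ∑ s,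
      (V : Matrix n n ℂ) j p * (V : Matrix n n ℂ) l q * conj ((V : Matrix n n ℂ) k r)
        * conj ((V : Matrix n n ℂ) m s) * fourthMoment μ e p q r s := by
  rw [fourthMoment, ← integral_mul_left_eq_self _ V]
  simp only [Matrix.UnitaryGroup.mul_val, ← mulVec_mulVec, quartic_mulVec (V : Matrix n n ℂ)]
  simp (disch := exact fun _ _ => Continuous.integrable_of_compactSpace (by fun_prop)) only
    [integral_finsetSum, integral_const_mul]
  rfl

theorem fourthMoment_perm (σ : Equiv.Perm n) (j l k m : n) :
    fourthMoment μ e j l k m = fourthMoment μ e (σ j) (σ l) (σ k) (σ m) := by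
  rw [fourthMoment_eq_sum μ e ⟨_, permMatrix_mem_unitaryGroup σ⟩]
  simp [Equiv.Perm.permMatrix, PEquiv.toMatrix_apply]

theorem fourthMoment_eq_phase_mul {t : n → ℂ} (ht : ∀ i, conj (t i) * t i = 1) (j l k m : n) :
    fourthMoment μ e j l k m
      = t j * t l * conj (t k) * conj (t m) * fourthMoment μ e j l k m := by
  conv_lhs => rw [fourthMoment_eq_sum μ e ⟨_, diagonal_mem_unitaryGroup ht⟩]
  simp [diagonal_apply, apply_ite (starRingEnd ℂ)]

theorem fourthMoment_eq_zero_of_phase_ne_one {t : n → ℂ} (ht : ∀ i, conj (t i) * t i = 1)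
    {j l k m : n} (h : t j * t l * conj (t k) * conj (t m) ≠ 1) :
    fourthMoment μ e j l k m = 0 := by
  by_contra hT
  exact h ((mul_eq_right₀ hT).mp (fourthMoment_eq_phase_mul μ e ht j l k m).symm)

theorem fourthMoment_eq_zero {j l k m : n} (h : ¬((j = k ∧ l = m) ∨ (j = m ∧ l = k))) :
    fourthMoment μ e j l k m = 0 := by
  have ht (a b : n) : conj (if b = a then I else 1) * (if b = a then I else 1) = 1 := by
    split_ifs <;> simp
  push Not at h
  by_cases hjk : j = k
  · subst hjk
    have hml : m ≠ l := (h.1 rfl).symm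
    refine fourthMoment_eq_zero_of_phase_ne_one μ e (ht l) ?_
    by_cases hjl : j = l <;> simp [hjl, hml, Complex.ext_iff]
  by_cases hjm : j = m
  · subst hjm
    refine fourthMoment_eq_zero_of_phase_ne_one μ e (ht k) ?_
    simp [hjk, h.2 rfl, Complex.ext_iff]
  refine fourthMoment_eq_zero_of_phase_ne_one μ e (ht j) ?_
  by_cases hlj : l = j <;> norm_num [hlj, Ne.symm hjk, Ne.symm hjm, Complex.ext_iff]

theorem fourthMoment_self_eq_two_mul {x y : n} (hxy : x ≠ y) :
    fourthMoment μ e x x x x = 2 * fourthMoment μ e x y x y := by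
  set S := (Equiv.swap x y).permMatrix ℂ
  have hV := smul_one_sub_I_smul_mem_unitary (A := Matrix n n ℂ) (S := S)
    (by simp [S, IsSelfAdjoint, star_eq_conjTranspose]) (by simp [S, ← permMatrix_mul])
  have h := fourthMoment_eq_sum μ e ⟨_, hV⟩ x x x x
  simp only [S, Equiv.Perm.permMatrix, Matrix.smul_apply, Matrix.sub_apply, one_apply,
    PEquiv.toMatrix_apply, Equiv.toPEquiv_apply, Equiv.swap_apply_left, Option.mem_def,
    Option.some.injEq, smul_eq_mul, mul_ite, mul_one, mul_zero, mul_sub, sub_mul, ite_mul, zero_mul,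
    map_sub, apply_ite (starRingEnd ℂ), map_div₀, map_add, map_one, conj_I, map_zero, map_mul,
    mul_neg, neg_sub, Finset.sum_sub_distrib, Finset.sum_ite_eq, Finset.mem_univ, ↓reduceIte] at h
  simp (disch := simp [hxy, hxy.symm]) only [fourthMoment_eq_zero μ e] at h
  rw [← fourthMoment_comm_right μ e x y y x, ← fourthMoment_comm_left μ e x y x y,
    fourthMoment_comm_left μ e y x y x, ← fourthMoment_comm_right μ e x y x y] at h
  have hY : fourthMoment μ e y y y y = fourthMoment μ e x x x x := by
    simpa using fourthMoment_perm μ e (Equiv.swap x y) y y y y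
  rw [hY, map_ofNat] at h
  linear_combination (norm := ring_nf) 2 * h
  simp only [I_pow_eq_pow_mod 6, I_pow_eq_pow_mod 8, Nat.reduceMod, I_pow_four, I_sq, pow_zero]
  ring

theorem fourthMoment_pair (j p q : n) :
    fourthMoment μ e p q p q = fourthMoment μ e j j j j / 2 * (1 + if p = q then 1 else 0) := by
  have hdiag : fourthMoment μ e p p p p = fourthMoment μ e j j j j := by
    simpa using fourthMoment_perm μ e (Equiv.swap p j) p p p p
  by_cases hpq : p = q
  · subst hpq
    rw [hdiag, if_pos rfl]
    ring
  · rw [fourthMoment_self_eq_two_mul μ e hpq] at hdiag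
    rw [if_neg hpq]
    linear_combination hdiag / 2

end

variable [IsProbabilityMeasure μ]

theorem sum_fourthMoment_self (he : star e ⬝ᵥ e = 1) :
    ∑ p, ∑ q, fourthMoment μ e p q p q = 1 := by
  have hnorm (U : unitaryGroup n ℂ) :
      star ((U : Matrix n n ℂ) *ᵥ e) ⬝ᵥ ((U : Matrix n n ℂ) *ᵥ e) = 1 := by
    rw [star_mulVec, ← dotProduct_mulVec, mulVec_mulVec, ← star_eq_conjTranspose,
      UnitaryGroup.star_mul_self, one_mulVec, he]
  have hsum : ∑ p, ∑ q, fourthMoment μ e p q p q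
      = ∫ U : unitaryGroup n ℂ, ∑ p, ∑ q, quartic p q p q ((U : Matrix n n ℂ) *ᵥ e) ∂μ := by
    simp (disch := exact fun _ _ => Continuous.integrable_of_compactSpace (by fun_prop)) only
      [integral_finsetSum]
    rfl
  simp [hsum, sum_quartic_self, hnorm]

variable [μ.IsMulLeftInvariant]

theorem fourthMoment_self (he : star e ⬝ᵥ e = 1) (j : n) :
    fourthMoment μ e j j j j = 2 / (Fintype.card n * (Fintype.card n + 1)) := by
  have hsum := sum_fourthMoment_self μ e he
  rw [Finset.sum_congr rfl fun p _ => Finset.sum_congr rfl fun q _ => fourthMoment_pair μ e j p q]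
    at hsum
  simp only [mul_add, mul_one, mul_ite, mul_zero, Finset.sum_add_distrib,
    Finset.sum_ite_eq, Finset.mem_univ, if_true, Finset.sum_const, Finset.card_univ,
    nsmul_eq_mul] at hsum
  have hcard : (Fintype.card n : ℂ) * (Fintype.card n + 1) ≠ 0 := by
    norm_cast
    exact mul_ne_zero (Fintype.card_pos_iff.mpr ⟨j⟩).ne' (Nat.succ_ne_zero _)
  rw [eq_div_iff hcard]
  linear_combination 2 * hsum

theorem fourthMoment_eq (he : star e ⬝ᵥ e = 1) (j l k m : n) :
    fourthMoment μ e j l k m = ((if j = k ∧ l = m then 1 else 0) + (if j = m ∧ l = k then 1 else 0))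
      / (Fintype.card n * (Fintype.card n + 1)) := by
  have hpair (p q : n) : fourthMoment μ e p q p q
      = (1 + if p = q then 1 else 0) / (Fintype.card n * (Fintype.card n + 1)) := by
    rw [fourthMoment_pair μ e j, fourthMoment_self μ e he]
    ring
  by_cases hjklm : j = k ∧ l = m
  · obtain ⟨rfl, rfl⟩ := hjklm
    rw [hpair]
    by_cases hjl : j = l
    · subst hjl
      simp only [and_self, ↓reduceIte]
    · simp [hjl]
  by_cases hjmlk : j = m ∧ l = k
  · obtain ⟨rfl, rfl⟩ := hjmlk
    have hjl : j ≠ l := fun h => hjklm ⟨h, h.symm⟩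
    rw [← fourthMoment_comm_right, hpair]
    simp [hjl, hjl.symm]
  rw [fourthMoment_eq_zero μ e (not_or.mpr ⟨hjklm, hjmlk⟩), if_neg hjklm, if_neg hjmlk]
  simp

theorem integral_mul_star_dotProduct_mulVec (he : star e ⬝ᵥ e = 1)
    (ρ : Matrix n n ℂ) (j k : n) :
    ∫ U : unitaryGroup n ℂ, ((U : Matrix n n ℂ) *ᵥ e) j * conj (((U : Matrix n n ℂ) *ᵥ e) k)
        * (star ((U : Matrix n n ℂ) *ᵥ e) ⬝ᵥ ρ *ᵥ ((U : Matrix n n ℂ) *ᵥ e)) ∂μ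
      = ((Fintype.card n * (Fintype.card n + 1) : ℂ)⁻¹ • (ρ.trace • 1 + ρ)) j k := by
  simp (disch := exact fun _ _ => Continuous.integrable_of_compactSpace (by fun_prop)) only
    [mul_star_dotProduct_mulVec_eq_sum, integral_finsetSum, integral_const_mul]
  simp only [← fourthMoment.eq_1 μ e, fourthMoment_eq μ e he]
  have hsum : ∑ m, ∑ l,
      ρ m l * ((if j = k ∧ l = m then 1 else 0) + (if j = m ∧ l = k then 1 else 0))
        = (ρ.trace • 1 + ρ) j k := by
    by_cases hjk : j = k <;> simp [hjk, trace, one_apply, mul_add, Finset.sum_add_distrib, ite_and]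
  simp only [mul_div_assoc', ← Finset.sum_div, hsum, Matrix.smul_apply, smul_eq_mul, inv_mul_eq_div]

end FourthMoment

theorem uniform_povm_first_moment_general
    {d : ℕ}
    [MeasurableSpace (Matrix.unitaryGroup (Fin d) ℂ)]
    [BorelSpace (Matrix.unitaryGroup (Fin d) ℂ)]
    (μ : Measure (Matrix.unitaryGroup (Fin d) ℂ)) [IsProbabilityMeasure μ]
    (hinv : ∀ V : Matrix.unitaryGroup (Fin d) ℂ, μ.map (fun U => V * U) = μ)
    (ρ : Matrix (Fin d) (Fin d) ℂ) (hρtr : ρ.trace = 1)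
    (e₀ : Fin d → ℂ) (he₀ : star e₀ ⬝ᵥ e₀ = 1) :
    ∀ j k : Fin d,
      (d : ℂ) * ∫ U : Matrix.unitaryGroup (Fin d) ℂ,
          (((U : Matrix (Fin d) (Fin d) ℂ).mulVec e₀ j)
            * (starRingEnd ℂ) ((U : Matrix (Fin d) (Fin d) ℂ).mulVec e₀ k))
          * (star ((U : Matrix (Fin d) (Fin d) ℂ).mulVec e₀)
              ⬝ᵥ ρ.mulVec ((U : Matrix (Fin d) (Fin d) ℂ).mulVec e₀)) ∂μ
      = ((((d : ℂ) + 1)⁻¹) • (1 + ρ)) j k := by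
  intro j k
  have : μ.IsMulLeftInvariant := ⟨hinv⟩
  have hd : (d : ℂ) ≠ 0 := Nat.cast_ne_zero.mpr (Fin.pos j).ne'
  rw [integral_mul_star_dotProduct_mulVec μ e₀ he₀, hρtr, one_smul, Fintype.card_fin]
  simp only [Matrix.smul_apply, smul_eq_mul, mul_inv, ← mul_assoc, mul_inv_cancel₀ hd, one_mul]

/-- the mean of the rank-one outcome of the uniform POVM applied to a
state `ρ` is `(I + ρ)/(d+1)`.  Haar measure on the unitary group is encoded as a
left-invariant Borel probability measure `μ` (which is unique on a compact group). -/
theorem uniform_povm_first_moment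
    {d : ℕ} (hd : 1 ≤ d)
    [MeasurableSpace (Matrix.unitaryGroup (Fin d) ℂ)]
    [BorelSpace (Matrix.unitaryGroup (Fin d) ℂ)]
    (μ : Measure (Matrix.unitaryGroup (Fin d) ℂ)) [IsProbabilityMeasure μ]
    (hinv : ∀ V : Matrix.unitaryGroup (Fin d) ℂ, μ.map (fun U => V * U) = μ)
    (ρ : Matrix (Fin d) (Fin d) ℂ) (hρ : ρ.PosSemidef) (hρtr : ρ.trace = 1)
    (e₀ : Fin d → ℂ) (he₀ : star e₀ ⬝ᵥ e₀ = 1) :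
    ∀ j k : Fin d,
      (d : ℂ) * ∫ U : Matrix.unitaryGroup (Fin d) ℂ,
          (((U : Matrix (Fin d) (Fin d) ℂ).mulVec e₀ j)
            * (starRingEnd ℂ) ((U : Matrix (Fin d) (Fin d) ℂ).mulVec e₀ k))
          * (star ((U : Matrix (Fin d) (Fin d) ℂ).mulVec e₀)
              ⬝ᵥ ρ.mulVec ((U : Matrix (Fin d) (Fin d) ℂ).mulVec e₀)) ∂μ
      = ((((d : ℂ) + 1)⁻¹) • (1 + ρ)) j k :=
  uniform_povm_first_moment_general μ hinv ρ hρtr e₀ he₀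
end

section
/- Let ρ be a density matrix on ℂ^d, let I denote the d×d identity, let ⊗ be the Kronecker product, and let F be the d²×d² swap matrix determined by F(a ⊗ b) = b ⊗ a for all a, b ∈ ℂ^d. Then the matrix (I⊗I + F)·(I⊗I + I⊗ρ + ρ⊗I) is Hermitian, positive semidefinite, and bounded above by 6·(I⊗I) in the Loewner (positive semidefinite) order. -/
/-!
Let `F` be the swap and `M = I⊗I + I⊗ρ + ρ⊗I`. As `F` is a Hermitian involution, `(I⊗I ± F)/2` are
orthogonal projections, and `F` commutes with `M` since conjugating by `F` exchanges `I⊗ρ` and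
`ρ⊗I`. A projection `P` commuting with `N ⪰ 0` satisfies `PN = PNP ⪰ 0`, whence `(I⊗I + F)M ⪰ 0`.
For the upper bound, `ρ ⪯ (tr ρ)·I = I` gives `M ⪯ 3·I⊗I`, and
`6·I⊗I - (I⊗I + F)M = 3(I⊗I - F) + (I⊗I + F)(3·I⊗I - M)` is a sum of two such positive terms.
-/

open Matrix
open scoped ComplexOrder Kronecker

section Involution

variable {R : Type*} [Ring R] {f : R}

lemma mul_self_one_add_of_mul_self_eq_one (hf : f * f = 1) :
    (1 + f) * (1 + f) = (1 + f) + (1 + f) := by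
  simp only [add_mul, mul_add, one_mul, mul_one, hf]
  abel

lemma mul_self_one_sub_of_mul_self_eq_one (hf : f * f = 1) :
    (1 - f) * (1 - f) = (1 - f) + (1 - f) := by
  simp only [sub_mul, mul_sub, one_mul, mul_one, hf]
  abel

end Involution

namespace Matrix

section Kronecker

variable {α l m n p : Type*} [Ring α]

theorem kronecker_sub (A : Matrix l m α) (B₁ B₂ : Matrix n p α) :
    A ⊗ₖ (B₁ - B₂) = A ⊗ₖ B₁ - A ⊗ₖ B₂ := by
  rw [eq_sub_iff_add_eq, ← kronecker_add, sub_add_cancel]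

theorem sub_kronecker (A₁ A₂ : Matrix l m α) (B : Matrix n p α) :
    (A₁ - A₂) ⊗ₖ B = A₁ ⊗ₖ B - A₂ ⊗ₖ B := by
  rw [eq_sub_iff_add_eq, ← add_kronecker, sub_add_cancel]

end Kronecker

section PosSemidef

variable {𝕜 n : Type*} [RCLike 𝕜] [Fintype n]

lemma PosSemidef.mul_of_commute_of_mul_self_eq_smul {S N : Matrix n n 𝕜} (hS : S.IsHermitian)
    {c : ℝ} (hc : 0 < c) (hSS : S * S = c • S) (hN : N.PosSemidef) (hSN : Commute S N) :
    (S * N).PosSemidef := by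
  have hconj : S * N * Sᴴ = c • (S * N) := by
    rw [hS.eq, mul_assoc, ← hSN.eq, ← mul_assoc, hSS, smul_mul_assoc]
  have := (hN.mul_mul_conjTranspose_same S).smul (inv_nonneg.2 hc.le)
  rwa [hconj, smul_smul, inv_mul_cancel₀ hc.ne', one_smul] at this

open scoped MatrixOrder in
lemma PosSemidef.re_trace_smul_one_sub [DecidableEq n] {A : Matrix n n 𝕜} (hA : A.PosSemidef) :
    (RCLike.re A.trace • 1 - A).PosSemidef := by
  rw [← le_iff, ← Algebra.algebraMap_eq_smul_one]
  refine le_algebraMap_of_spectrum_le (fun x hx => ?_) hA.1.isSelfAdjoint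
  obtain ⟨i, rfl⟩ := hA.1.spectrum_real_eq_range_eigenvalues ▸ hx
  simp only [hA.1.trace_eq_sum_eigenvalues, map_sum, RCLike.ofReal_re]
  exact Finset.single_le_sum (fun j _ => hA.eigenvalues_nonneg j) (Finset.mem_univ i)

end PosSemidef

section Swap

variable (n : Type*) (R : Type*) [DecidableEq n] [CommRing R]

def swapMatrix : Matrix (n × n) (n × n) R := Equiv.Perm.permMatrix R (Equiv.prodComm n n)

variable {n R}

lemma swapMatrix_isHermitian [StarRing R] : (swapMatrix n R).IsHermitian := by
  rw [IsHermitian, swapMatrix, conjTranspose_permMatrix]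
  rfl

variable [Fintype n]

lemma swapMatrix_mulVec (v : n × n → R) : swapMatrix n R *ᵥ v = v ∘ Prod.swap :=
  permMatrix_mulVec _

lemma eq_swapMatrix_of_mulVec {F : Matrix (n × n) (n × n) R}
    (hF : ∀ a b : n → R, F *ᵥ (fun p => a p.1 * b p.2) = fun p => b p.1 * a p.2) :
    F = swapMatrix n R := by
  refine ext_of_mulVec_single fun ⟨i, j⟩ => ?_
  have hsingle : (Pi.single (i, j) 1 : n × n → R) =
      fun p => (Pi.single i 1 : n → R) p.1 * (Pi.single j 1 : n → R) p.2 := by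
    ext ⟨k, l⟩
    simp only [Pi.single_apply, Prod.mk.injEq, ite_zero_mul_ite_zero, mul_one]
  rw [swapMatrix_mulVec, hsingle, hF]
  ext ⟨k, l⟩
  simp only [Function.comp_apply, Prod.swap_prod_mk, Pi.single_apply, ite_zero_mul_ite_zero,
    mul_one, and_comm]

lemma swapMatrix_mul_self : swapMatrix n R * swapMatrix n R = 1 := by
  rw [swapMatrix, ← permMatrix_mul]
  convert permMatrix_one
  ext <;> rfl

lemma swapMatrix_mul_kronecker (A B : Matrix n n R) :
    swapMatrix n R * (A ⊗ₖ B) = (B ⊗ₖ A) * swapMatrix n R := by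
  rw [swapMatrix, PEquiv.toMatrix_toPEquiv_mul, PEquiv.mul_toMatrix_toPEquiv]
  ext ⟨i, j⟩ ⟨k, l⟩
  simp [mul_comm]

lemma commute_swapMatrix_kronecker_add (A B : Matrix n n R) :
    Commute (swapMatrix n R) (A ⊗ₖ B + B ⊗ₖ A) := by
  simp only [Commute, SemiconjBy, mul_add, add_mul, swapMatrix_mul_kronecker]
  exact add_comm _ _

end Swap

section SwapPosSemidef

variable {𝕜 n : Type*} [RCLike 𝕜] [Fintype n] [DecidableEq n]

lemma PosSemidef.one_add_swapMatrix_mul {N : Matrix (n × n) (n × n) 𝕜} (hN : N.PosSemidef)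
    (hFN : Commute (swapMatrix n 𝕜) N) : ((1 + swapMatrix n 𝕜) * N).PosSemidef := by
  refine hN.mul_of_commute_of_mul_self_eq_smul (isHermitian_one.add swapMatrix_isHermitian)
    two_pos ?_ ((Commute.one_left N).add_left hFN)
  rw [two_smul]
  exact mul_self_one_add_of_mul_self_eq_one swapMatrix_mul_self

lemma posSemidef_one_sub_swapMatrix : (1 - swapMatrix n 𝕜).PosSemidef := by
  have hsq : (1 - swapMatrix n 𝕜) * (1 - swapMatrix n 𝕜) = (2 : ℝ) • (1 - swapMatrix n 𝕜) := by
    rw [two_smul]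
    exact mul_self_one_sub_of_mul_self_eq_one swapMatrix_mul_self
  simpa using PosSemidef.one.mul_of_commute_of_mul_self_eq_smul
    (isHermitian_one.sub swapMatrix_isHermitian) two_pos hsq (Commute.one_right _)

end SwapPosSemidef

end Matrix

/-- for a density matrix `ρ`, the matrix
`(I⊗I + F)(I⊗I + I⊗ρ + ρ⊗I)` is Hermitian, positive semidefinite, and at most
`6·(I⊗I)` in the Loewner order, where `F` is the swap matrix. -/
theorem second_moment_matrix_bounds
    {d : ℕ} (ρ : Matrix (Fin d) (Fin d) ℂ) (hρ : ρ.PosSemidef) (hρtr : ρ.trace = 1)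
    (F : Matrix (Fin d × Fin d) (Fin d × Fin d) ℂ)
    (hF : ∀ a b : Fin d → ℂ,
      F.mulVec (fun p => a p.1 * b p.2) = fun p => b p.1 * a p.2) :
    (((1 : Matrix (Fin d) (Fin d) ℂ) ⊗ₖ (1 : Matrix (Fin d) (Fin d) ℂ) + F) *
        ((1 : Matrix (Fin d) (Fin d) ℂ) ⊗ₖ (1 : Matrix (Fin d) (Fin d) ℂ)
          + (1 : Matrix (Fin d) (Fin d) ℂ) ⊗ₖ ρ
          + ρ ⊗ₖ (1 : Matrix (Fin d) (Fin d) ℂ))).IsHermitian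
    ∧ (((1 : Matrix (Fin d) (Fin d) ℂ) ⊗ₖ (1 : Matrix (Fin d) (Fin d) ℂ) + F) *
        ((1 : Matrix (Fin d) (Fin d) ℂ) ⊗ₖ (1 : Matrix (Fin d) (Fin d) ℂ)
          + (1 : Matrix (Fin d) (Fin d) ℂ) ⊗ₖ ρ
          + ρ ⊗ₖ (1 : Matrix (Fin d) (Fin d) ℂ))).PosSemidef
    ∧ ((6 : ℂ) • ((1 : Matrix (Fin d) (Fin d) ℂ) ⊗ₖ (1 : Matrix (Fin d) (Fin d) ℂ))
        - ((1 : Matrix (Fin d) (Fin d) ℂ) ⊗ₖ (1 : Matrix (Fin d) (Fin d) ℂ) + F) *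
          ((1 : Matrix (Fin d) (Fin d) ℂ) ⊗ₖ (1 : Matrix (Fin d) (Fin d) ℂ)
            + (1 : Matrix (Fin d) (Fin d) ℂ) ⊗ₖ ρ
            + ρ ⊗ₖ (1 : Matrix (Fin d) (Fin d) ℂ))).PosSemidef := by
  obtain rfl := eq_swapMatrix_of_mulVec hF
  simp only [one_kronecker_one]
  set F := swapMatrix (Fin d) ℂ
  set M : Matrix (Fin d × Fin d) (Fin d × Fin d) ℂ := 1 + 1 ⊗ₖ ρ + ρ ⊗ₖ 1 with hM_def
  have hFM : Commute F M := by
    rw [hM_def, add_assoc]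
    exact (Commute.one_right F).add_right (commute_swapMatrix_kronecker_add 1 ρ)
  have hM : M.PosSemidef :=
    (PosSemidef.one.add (PosSemidef.one.kronecker hρ)).add (hρ.kronecker .one)
  have hlower : ((1 + F) * M).PosSemidef := hM.one_add_swapMatrix_mul hFM
  refine ⟨hlower.1, hlower, ?_⟩
  have hρ_le_one : (1 - ρ).PosSemidef := by simpa [hρtr] using hρ.re_trace_smul_one_sub
  have hgap : ((3 : ℂ) • 1 - M).PosSemidef := by
    have hgap_eq : (3 : ℂ) • 1 - M = 1 ⊗ₖ (1 - ρ) + (1 - ρ) ⊗ₖ 1 := by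
      rw [kronecker_sub, sub_kronecker, one_kronecker_one, hM_def]
      module
    rw [hgap_eq]
    exact (PosSemidef.one.kronecker hρ_le_one).add (hρ_le_one.kronecker .one)
  have hsplit : (6 : ℂ) • 1 - (1 + F) * M = (3 : ℂ) • (1 - F) + (1 + F) * ((3 : ℂ) • 1 - M) := by
    simp only [add_mul, one_mul, mul_sub, mul_smul_comm, mul_one]
    module
  rw [hsplit]
  exact (posSemidef_one_sub_swapMatrix.smul (by norm_num)).add <|
    hgap.one_add_swapMatrix_mul (((Commute.one_right F).smul_right 3).sub_right hFM)
end
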